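/- Let C be a field of characteristic zero and let P, Q ⊆ C[X_1, …, X_n] be prime ideals. Let R be a minimal prime ideal over P + Q. Let v ∈ L_1^n, u ∈ L_2^n, w ∈ L_3^n (for field extensions L_1, L_2, L_3 of C) be generic points over C of P, Q, R respectively. Let f_1, …, f_n ∈ C(X_1, …, X_n) be rational functions, each with a representation a_i/b_i with a_i, b_i ∈ C[X_1, …, X_n] and b_i ∉ P, b_i ∉ Q, b_i ∉ R (so each f_i is defined at v, u and w). Suppose there is a derivation D_1 of the subfield C(v) ⊆ L_1 over C with D_1(v_i) = f_i(v) for i = 1, …, n, and a derivation D_2 of the subfield C(u) ⊆ L_2 over C with D_2(u_i) = f_i(u) for i = 1, …, n. Then there is a derivation D of the subfield C(w) ⊆ L_3 over C with D(w_i) = f_i(w) for i = 1, …, n. -/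

import Mathlib

/-!
Write `fᵢ = aᵢ / bᵢ` and let `δ = ∑ᵢ aᵢ (∏_{j ≠ i} bⱼ) ∂ᵢ`, the polynomial vector field
`(∏ⱼ bⱼ) · f`. For a generic point `w` of a prime `R` with all `bᵢ ∉ R`, a derivation of `C(w)`
with `wᵢ ↦ fᵢ(w)` exists iff `δ R ⊆ R`: one direction is the chain rule
`D (p(w)) = (δ p)(w) / ∏ⱼ bⱼ(w)`, for the other `δ` descends to `C[w] ≅ C[X] / R` and extends to
its fraction field `C(w)`. Hence `δ P ⊆ P` and `δ Q ⊆ Q`, so `δ (P + Q) ⊆ P + Q`. In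
characteristic zero a minimal prime `R` over a `δ`-stable ideal `I` is `δ`-stable: for `x ∈ R`
there are `s ∉ R` and `m` with `s xᵐ ∈ I`, and differentiating trades one factor `x` for two
factors `δ x` until `s' (δ x)^(2m) ∈ I ⊆ R`.
-/

open MvPolynomial

theorem Derivation.map_aeval_eq_sum_pderiv {R σ A : Type*} [CommRing R] [Fintype σ] [CommRing A]
    [Algebra R A] (D : Derivation R A A) (x : σ → A) (p : MvPolynomial σ R) :
    D (aeval x p) = ∑ i, aeval x (pderiv i p) * D (x i) := by
  classical
  induction p using MvPolynomial.induction_on with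
  | C c => simp
  | add p q hp hq => simp [hp, hq, add_mul, Finset.sum_add_distrib]
  | mul_X p i hp =>
    simp [Derivation.leibniz, pderiv_X, Pi.single_apply, hp, add_mul, Finset.sum_add_distrib,
      Finset.mul_sum, apply_ite, ite_mul, mul_assoc]

theorem Derivation.map_aeval_eq_aeval_mkDerivation {R σ A : Type*} [CommRing R] [Fintype σ]
    [CommRing A] [Algebra R A] (D : Derivation R A A) (x : σ → A) (c : σ → MvPolynomial σ R)
    (hD : ∀ i, D (x i) = aeval x (c i)) (p : MvPolynomial σ R) :
    D (aeval x p) = aeval x (mkDerivation R c p) := by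
  have hδ : mkDerivation R c p = ∑ i, pderiv i p * c i := by
    simpa using (mkDerivation R c).map_aeval_eq_sum_pderiv X p
  simp [D.map_aeval_eq_sum_pderiv, hδ, hD]

theorem Ideal.mapsTo_sup {A F : Type*} [CommRing A] [FunLike F A A] [AddMonoidHomClass F A A]
    (f : F) {I J : Ideal A} (hI : Set.MapsTo f I I) (hJ : Set.MapsTo f J J) :
    Set.MapsTo f ↑(I ⊔ J) ↑(I ⊔ J) := by
  intro y hy
  obtain ⟨p, hp, q, hq, rfl⟩ := Submodule.mem_sup.1 hy
  rw [map_add]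
  exact add_mem (Ideal.mem_sup_left (hI hp)) (Ideal.mem_sup_right (hJ hq))

theorem Ideal.exists_mul_pow_mem_of_mem_minimalPrimes {A : Type*} [CommRing A] {I p : Ideal A}
    (hp : p ∈ I.minimalPrimes) {x : A} (hx : x ∈ p) : ∃ s ∉ p, ∃ m : ℕ, s * x ^ m ∈ I := by
  have := hp.1.1
  obtain ⟨m, hm⟩ : algebraMap A (Localization.AtPrime p) x ∈ (I.map (algebraMap _ _)).radical := by
    rw [IsLocalization.AtPrime.radical_map_of_mem_minimalPrimes _ p I hp]
    exact Ideal.mem_map_of_mem _ hx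
  rw [← map_pow, IsLocalization.algebraMap_mem_map_algebraMap_iff p.primeCompl] at hm
  obtain ⟨s, hs, h⟩ := hm
  exact ⟨s, hs, m, h⟩

section DifferentialIdeal

variable {K A : Type*} [Field K] [CharZero K] [CommRing A] [Algebra K A]
  {δ : Derivation K A A} {I : Ideal A}

theorem sq_mul_pow_mul_deriv_pow_mem (hI : Set.MapsTo δ I I) {s x : A} {k r : ℕ}
    (h : s * x ^ (k + 1) * δ x ^ r ∈ I) : s ^ 2 * x ^ k * δ x ^ (r + 2) ∈ I := by
  have key : ((k + 1 : ℕ) : A) * (s ^ 2 * x ^ k * δ x ^ (r + 2)) =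
      s * δ x * δ (s * x ^ (k + 1) * δ x ^ r)
        - (δ s * δ x + r * s * δ (δ x)) * (s * x ^ (k + 1) * δ x ^ r) := by
    simp only [Derivation.leibniz, Derivation.leibniz_pow, smul_eq_mul, nsmul_eq_mul]
    rcases r with _ | r <;> push_cast <;> ring
  have hunit : IsUnit ((k + 1 : ℕ) : A) := by
    rw [← map_natCast (algebraMap K A)]
    exact (IsUnit.mk0 _ (Nat.cast_ne_zero.2 k.succ_ne_zero)).map _
  rw [← Ideal.unit_mul_mem_iff_mem I hunit, key]
  exact I.sub_mem (I.mul_mem_left _ (hI h)) (I.mul_mem_left _ h)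

theorem pow_two_pow_mul_deriv_pow_mem (hI : Set.MapsTo δ I I) {s x : A} {k r : ℕ}
    (h : s * x ^ k * δ x ^ r ∈ I) : s ^ 2 ^ k * δ x ^ (r + 2 * k) ∈ I := by
  induction k generalizing s r with
  | zero => simpa using h
  | succ k ih =>
    have := ih (sq_mul_pow_mul_deriv_pow_mem hI h)
    rwa [← pow_mul, ← pow_succ', show r + 2 + 2 * k = r + 2 * (k + 1) by ring] at this

theorem Ideal.mapsTo_of_mem_minimalPrimes (hI : Set.MapsTo δ I I) {p : Ideal A}
    (hp : p ∈ I.minimalPrimes) : Set.MapsTo δ p p := by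
  intro x hx
  have hprime := hp.1.1
  obtain ⟨s, hs, m, h⟩ := Ideal.exists_mul_pow_mem_of_mem_minimalPrimes hp hx
  have hmem := hp.1.2 (pow_two_pow_mul_deriv_pow_mem hI (r := 0) (by simpa using h))
  have hδx := (hprime.mem_or_mem hmem).resolve_left fun hs' => hs (hprime.mem_of_pow_mem _ hs')
  exact hprime.mem_of_pow_mem _ hδx

end DifferentialIdeal

section FractionRing

open TrivSqZeroExt

variable {R A K : Type*} [CommRing R] [CommRing A] [Algebra R A] [Field K] [Algebra A K]
  [IsFractionRing A K] [Algebra R K] [IsScalarTower R A K]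

@[simps]
def Derivation.toTrivSqZeroExt (d : Derivation R A K) : A →ₐ[R] TrivSqZeroExt K K where
  toFun a := inl (algebraMap A K a) + inr (d a)
  map_one' := by ext <;> simp
  map_mul' a b := by
    ext
    · simp
    · simp only [snd_mul, fst_add, snd_add, fst_inl, fst_inr, snd_inl, snd_inr, map_mul,
        Derivation.leibniz, smul_eq_mul, op_smul_eq_mul, Algebra.smul_def]
      ring
  map_zero' := by ext <;> simp
  map_add' a b := by ext <;> simp
  commutes' r := by ext <;> simp [algebraMap_eq_inl', IsScalarTower.algebraMap_apply R A K]

/-- The hom `a ↦ a + d(a) ε` into the dual numbers sends nonzero divisors to units, so it extends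
to `K`; its `ε`-component is the extended derivation. -/
theorem Derivation.exists_extension_of_isFractionRing (d : Derivation R A K) :
    ∃ D : Derivation R K K, ∀ a, D (algebraMap A K a) = d a := by
  have hunit : ∀ s : nonZeroDivisors A, IsUnit (d.toTrivSqZeroExt s) := fun s => by
    simpa [isUnit_iff_isUnit_fst] using IsLocalization.map_units K s
  let Φ : K →ₐ[R] TrivSqZeroExt K K := IsLocalization.liftAlgHom hunit
  have hΦ : ∀ a, Φ (algebraMap A K a) = d.toTrivSqZeroExt a := IsLocalization.lift_eq _
  have hfst : ∀ x, (Φ x).fst = x := by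
    have : ((fstHom R K K).comp Φ).toRingHom = RingHom.id K :=
      IsLocalization.ringHom_ext (nonZeroDivisors A) (RingHom.ext fun a => by simp [hΦ])
    exact fun x => congrArg (· x) this
  refine ⟨Derivation.mk' (((sndHom K K).restrictScalars R).comp Φ.toLinearMap) fun x y => ?_,
    fun a => by simp [hΦ]⟩
  simp [hfst, mul_comm]

end FractionRing

section GenericPoint

open IntermediateField Finset

variable (F : Type*) {L ι : Type*} [Field F] [Field L] [Algebra F L]

def adjoinRangeGen (w : ι → L) (i : ι) : adjoin F (Set.range w) :=
  ⟨w i, subset_adjoin F _ ⟨i, rfl⟩⟩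

variable {F}

theorem coe_aeval_adjoinRangeGen (w : ι → L) (p : MvPolynomial ι F) :
    (aeval (adjoinRangeGen F w) p : L) = aeval w p :=
  comp_aeval_apply _ (adjoin F (Set.range w)).val p

variable {R : Ideal (MvPolynomial ι F)} {w : ι → L}

theorem mapsTo_mkDerivation_of_derivation_adjoin [Fintype ι] (hw : ∀ r, aeval w r = 0 ↔ r ∈ R)
    (c : ι → MvPolynomial ι F) (D : Derivation F (adjoin F (Set.range w)) (adjoin F (Set.range w)))
    (hD : ∀ i, D (adjoinRangeGen F w i) = aeval (adjoinRangeGen F w) (c i)) :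
    Set.MapsTo (mkDerivation F c) R R := by
  intro p hp
  have hp0 : aeval (adjoinRangeGen F w) p = 0 :=
    Subtype.ext ((coe_aeval_adjoinRangeGen w p).trans ((hw p).2 hp))
  have h := D.map_aeval_eq_aeval_mkDerivation _ c hD p
  rw [hp0, map_zero, eq_comm, ← Subtype.coe_inj, coe_aeval_adjoinRangeGen] at h
  exact (hw _).1 h

open algebraAdjoinAdjoin in
theorem exists_derivation_adjoin_of_mapsTo (hw : ∀ r, aeval w r = 0 ↔ r ∈ R)
    (δ : Derivation F (MvPolynomial ι F) (MvPolynomial ι F)) (hδ : Set.MapsTo δ R R) :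
    ∃ D : Derivation F (adjoin F (Set.range w)) (adjoin F (Set.range w)),
      ∀ p, D (aeval (adjoinRangeGen F w) p) = aeval (adjoinRangeGen F w) (δ p) := by
  let f : MvPolynomial ι F →ₐ[F] Algebra.adjoin F (Set.range w) :=
    aeval fun i => ⟨w i, Algebra.subset_adjoin ⟨i, rfl⟩⟩
  have hf_coe : ∀ p, (f p : L) = aeval w p :=
    fun p => comp_aeval_apply _ (Algebra.adjoin F (Set.range w)).val p
  have hf : Function.Surjective f := by
    rintro ⟨y, hy⟩
    rw [Algebra.adjoin_range_eq_range_aeval] at hy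
    obtain ⟨p, rfl⟩ := hy
    exact ⟨p, Subtype.ext (hf_coe p)⟩
  have hfδ : ∀ p, f p = 0 → f (δ p) = 0 := fun p hp => by
    rw [← Subtype.coe_inj, hf_coe] at hp ⊢
    exact (hw _).2 (hδ ((hw p).1 hp))
  obtain ⟨D, hD⟩ := ((Algebra.linearMap _ (adjoin F (Set.range w))).compDer
    (Derivation.liftOfSurjective hf hfδ)).exists_extension_of_isFractionRing
  have hgen : ∀ p, aeval (adjoinRangeGen F w) p = algebraMap _ (adjoin F (Set.range w)) (f p) :=
    fun p => Subtype.ext ((coe_aeval_adjoinRangeGen w p).trans (hf_coe p).symm)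
  exact ⟨D, fun p => by rw [hgen, hD, hgen, ← Derivation.liftOfSurjective_apply hf hfδ]; rfl⟩

theorem exists_derivation_adjoin_iff_mapsTo [Fintype ι] [DecidableEq ι]
    (hw : ∀ r, aeval w r = 0 ↔ r ∈ R) {a b : ι → MvPolynomial ι F} (hb : ∀ i, b i ∉ R) :
    (∃ D : Derivation F (adjoin F (Set.range w)) (adjoin F (Set.range w)),
      ∀ i, (D (adjoinRangeGen F w i) : L) = aeval w (a i) / aeval w (b i)) ↔
      Set.MapsTo (mkDerivation F fun i => a i * ∏ j ∈ univ.erase i, b j) R R := by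
  set x := adjoinRangeGen F w
  have hbx : ∀ i, aeval x (b i) ≠ 0 := fun i h =>
    hb i ((hw _).1 (by rw [← coe_aeval_adjoinRangeGen, h, ZeroMemClass.coe_zero]))
  set β := aeval x (∏ j, b j)
  have hβ : β ≠ 0 := by simpa [β] using prod_ne_zero_iff.2 fun j _ => hbx j
  have hc : ∀ i, aeval x (a i * ∏ j ∈ univ.erase i, b j) = β * (aeval x (a i) / aeval x (b i)) :=
    fun i => by
      simp only [β, map_mul, map_prod, ← mul_prod_erase univ (fun j => aeval x (b j)) (mem_univ i)]
      field_simp [hbx i]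
  have hcoe : ∀ (D : Derivation F (adjoin F (Set.range w)) (adjoin F (Set.range w))) i,
      (D (x i) : L) = aeval w (a i) / aeval w (b i) ↔ D (x i) = aeval x (a i) / aeval x (b i) :=
    fun D i => by rw [← Subtype.coe_inj, IntermediateField.coe_div, coe_aeval_adjoinRangeGen,
      coe_aeval_adjoinRangeGen]
  constructor
  · rintro ⟨D, hD⟩
    refine mapsTo_mkDerivation_of_derivation_adjoin hw _ (β • D) fun i => ?_
    rw [Derivation.smul_apply, smul_eq_mul, (hcoe D i).1 (hD i), hc]
  · intro hδ
    obtain ⟨D, hD⟩ := exists_derivation_adjoin_of_mapsTo hw _ hδ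
    refine ⟨β⁻¹ • D, fun i => (hcoe _ i).2 ?_⟩
    have hDx := hD (X i)
    rw [aeval_X, mkDerivation_X, hc] at hDx
    rw [Derivation.smul_apply, smul_eq_mul, hDx, inv_mul_cancel_left₀ hβ]

end GenericPoint

theorem derivation_on_component_of_intersection_general
    {C : Type*} [Field C] [CharZero C] {n : ℕ}
    (P Q R : Ideal (MvPolynomial (Fin n) C))
    (hR : R ∈ (P ⊔ Q).minimalPrimes)
    {L₁ L₂ L₃ : Type*} [Field L₁] [Field L₂] [Field L₃]
    [Algebra C L₁] [Algebra C L₂] [Algebra C L₃]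
    (v : Fin n → L₁) (u : Fin n → L₂) (w : Fin n → L₃)
    (hv : ∀ r : MvPolynomial (Fin n) C, aeval v r = 0 ↔ r ∈ P)
    (hu : ∀ r : MvPolynomial (Fin n) C, aeval u r = 0 ↔ r ∈ Q)
    (hw : ∀ r : MvPolynomial (Fin n) C, aeval w r = 0 ↔ r ∈ R)
    (a b : Fin n → MvPolynomial (Fin n) C)
    (hbP : ∀ i, b i ∉ P) (hbQ : ∀ i, b i ∉ Q) (hbR : ∀ i, b i ∉ R)
    (D₁ : Derivation C (IntermediateField.adjoin C (Set.range v))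
      (IntermediateField.adjoin C (Set.range v)))
    (hD₁ : ∀ i, (D₁ ⟨v i, IntermediateField.subset_adjoin C (Set.range v) ⟨i, rfl⟩⟩ : L₁) =
      aeval v (a i) / aeval v (b i))
    (D₂ : Derivation C (IntermediateField.adjoin C (Set.range u))
      (IntermediateField.adjoin C (Set.range u)))
    (hD₂ : ∀ i, (D₂ ⟨u i, IntermediateField.subset_adjoin C (Set.range u) ⟨i, rfl⟩⟩ : L₂) =
      aeval u (a i) / aeval u (b i)) :
    ∃ D : Derivation C (IntermediateField.adjoin C (Set.range w))
      (IntermediateField.adjoin C (Set.range w)),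
      ∀ i, (D ⟨w i, IntermediateField.subset_adjoin C (Set.range w) ⟨i, rfl⟩⟩ : L₃) =
        aeval w (a i) / aeval w (b i) := by
  have hδP := (exists_derivation_adjoin_iff_mapsTo hv hbP).1 ⟨D₁, hD₁⟩
  have hδQ := (exists_derivation_adjoin_iff_mapsTo hu hbQ).1 ⟨D₂, hD₂⟩
  have hδR := Ideal.mapsTo_of_mem_minimalPrimes (Ideal.mapsTo_sup _ hδP hδQ) hR
  exact (exists_derivation_adjoin_iff_mapsTo hw hbR).2 hδR

/-- Let `P, Q` be prime ideals of `C[X₁, …, Xₙ]` and `R` a minimal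
prime over `P + Q`.  Let `v, u, w` be generic points (in field extensions of `C`) of
`P, Q, R` respectively, and let `fᵢ = aᵢ/bᵢ` be rational functions whose denominators
lie outside `P`, `Q` and `R`.  If there are derivations over `C` of `C(v)` and of
`C(u)` sending `vᵢ ↦ fᵢ(v)` and `uᵢ ↦ fᵢ(u)` respectively, then there is a derivation
over `C` of `C(w)` sending `wᵢ ↦ fᵢ(w)`. -/
theorem derivation_on_component_of_intersection
    {C : Type*} [Field C] [CharZero C] {n : ℕ}
    (P Q R : Ideal (MvPolynomial (Fin n) C))
    (hP : P.IsPrime) (hQ : Q.IsPrime)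
    (hR : R ∈ (P ⊔ Q).minimalPrimes)
    {L₁ L₂ L₃ : Type*} [Field L₁] [Field L₂] [Field L₃]
    [Algebra C L₁] [Algebra C L₂] [Algebra C L₃]
    (v : Fin n → L₁) (u : Fin n → L₂) (w : Fin n → L₃)
    (hv : ∀ r : MvPolynomial (Fin n) C, aeval v r = 0 ↔ r ∈ P)
    (hu : ∀ r : MvPolynomial (Fin n) C, aeval u r = 0 ↔ r ∈ Q)
    (hw : ∀ r : MvPolynomial (Fin n) C, aeval w r = 0 ↔ r ∈ R)
    (a b : Fin n → MvPolynomial (Fin n) C)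
    (hbP : ∀ i, b i ∉ P) (hbQ : ∀ i, b i ∉ Q) (hbR : ∀ i, b i ∉ R)
    (D₁ : Derivation C (IntermediateField.adjoin C (Set.range v))
      (IntermediateField.adjoin C (Set.range v)))
    (hD₁ : ∀ i, (D₁ ⟨v i, IntermediateField.subset_adjoin C (Set.range v) ⟨i, rfl⟩⟩ : L₁) =
      aeval v (a i) / aeval v (b i))
    (D₂ : Derivation C (IntermediateField.adjoin C (Set.range u))
      (IntermediateField.adjoin C (Set.range u)))
    (hD₂ : ∀ i, (D₂ ⟨u i, IntermediateField.subset_adjoin C (Set.range u) ⟨i, rfl⟩⟩ : L₂) =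
      aeval u (a i) / aeval u (b i)) :
    ∃ D : Derivation C (IntermediateField.adjoin C (Set.range w))
      (IntermediateField.adjoin C (Set.range w)),
      ∀ i, (D ⟨w i, IntermediateField.subset_adjoin C (Set.range w) ⟨i, rfl⟩⟩ : L₃) =
        aeval w (a i) / aeval w (b i) :=
  derivation_on_component_of_intersection_general P Q R hR v u w hv hu hw a b hbP hbQ hbR D₁ hD₁ D₂
    hD₂
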